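/- Let T^J(E) = t'_n(E)·t'_{n−1}(E)⋯t'_1(E) be the transfer matrix of the inverted chain, where t'_k(E) = [[C_{n+1−k}⁻¹(E·I_m − A_{n+1−k}), −C_{n+1−k}⁻¹·B_{n+1−k}], [I_m, 0]] (i.e. the chain with data A'_k = A_{n+1−k}, B'_k = C_{n+1−k}, C'_k = B_{n+1−k}). Let σ_x be the 2m×2m block matrix [[0, I_m],[I_m, 0]]. Then for every E ∈ ℂ, T(E)⁻¹ = σ_x·T^J(E)·σ_x. -/

import Mathlib

/-!
Conjugation by `σₓ = [[0, 1], [1, 0]]` swaps the diagonal and the off-diagonal blocks, so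
`σₓ tᴶ σₓ = [[0, 1], [-C⁻¹B, C⁻¹(E - A)]]` when `tᴶ` is the step with `B` and `C` exchanged, and a
direct block computation shows that this is the inverse of `t = [[B⁻¹(E - A), -B⁻¹C], [1, 0]]`.
Since `σₓ² = 1`, conjugation by `σₓ` is multiplicative, so `σₓ Tᴶ σₓ` is the product of these step
inverses; the inverted chain lists them in the opposite order, which is the order of `T⁻¹`.
-/

open Matrix

noncomputable def tstep {m : ℕ} (A B C : Matrix (Fin m) (Fin m) ℂ) (E : ℂ) :
    Matrix (Fin m ⊕ Fin m) (Fin m ⊕ Fin m) ℂ :=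
  Matrix.fromBlocks (B⁻¹ * (E • 1 - A)) (-(B⁻¹ * C)) 1 0

/-- The transfer matrix `T(E) = t_n(E) ⋯ t_1(E)` (0-indexed: `t_{n-1} ⋯ t_0`). -/
noncomputable def transfer {n m : ℕ} (A B C : Fin n → Matrix (Fin m) (Fin m) ℂ) (E : ℂ) :
    Matrix (Fin m ⊕ Fin m) (Fin m ⊕ Fin m) ℂ :=
  ((List.ofFn fun k : Fin n => tstep (A k) (B k) (C k) E).reverse).prod

theorem List.conj_prod_eq_prod_map_conj {M : Type*} [Monoid M] {σ : M} (hσ : σ * σ = 1)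
    (L : List M) : σ * L.prod * σ = (L.map fun x => σ * x * σ).prod := by
  induction L with
  | nil => simpa using hσ
  | cons a L ih =>
    rw [List.map_cons, List.prod_cons, List.prod_cons, ← ih]
    simp only [mul_assoc]
    rw [← mul_assoc σ σ, hσ, one_mul]

theorem List.prod_reverse_ofFn_mul_prod_ofFn_eq_one {M : Type*} [Monoid M] {n : ℕ}
    (u w : Fin n → M) (h : ∀ k, u k * w k = 1) :
    (List.ofFn u).reverse.prod * (List.ofFn w).prod = 1 := by
  induction n with
  | zero => simp
  | succ n ih =>
    rw [List.ofFn_succ, List.ofFn_succ, List.reverse_cons, List.prod_append, List.prod_singleton,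
      List.prod_cons, mul_assoc, ← mul_assoc (u 0), h 0, one_mul]
    exact ih _ _ fun k => h k.succ

theorem List.reverse_ofFn_comp_rev {α : Type*} {n : ℕ} (f : Fin n → α) :
    (List.ofFn fun k : Fin n => f k.rev).reverse = List.ofFn f := by
  refine List.ext_getElem (by simp) fun i hi _ => ?_
  simp only [List.length_reverse, List.length_ofFn] at hi
  simp only [List.getElem_reverse, List.getElem_ofFn, List.length_ofFn]
  congr
  ext
  simp only [Fin.val_rev]
  omega

section SwapBlocks

variable {ι R : Type*} [Fintype ι] [DecidableEq ι] [Semiring R]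

theorem Matrix.fromBlocks_zero_one_one_zero_mul_self :
    (fromBlocks 0 1 1 0 : Matrix (ι ⊕ ι) (ι ⊕ ι) R) * fromBlocks 0 1 1 0 = 1 := by
  simp [fromBlocks_multiply, ← fromBlocks_one]

theorem Matrix.fromBlocks_zero_one_one_zero_conj (P Q S T : Matrix ι ι R) :
    fromBlocks 0 1 1 0 * fromBlocks P Q S T * fromBlocks 0 1 1 0 = fromBlocks T S Q P := by
  simp [fromBlocks_multiply]

end SwapBlocks

theorem tstep_mul_swap_conj_tstep {m : ℕ} {A B C : Matrix (Fin m) (Fin m) ℂ} (E : ℂ)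
    (hB : IsUnit B) (hC : IsUnit C) :
    tstep A B C E * (fromBlocks 0 1 1 0 * tstep A C B E * fromBlocks 0 1 1 0) = 1 := by
  have hB' := (isUnit_iff_isUnit_det B).mp hB
  have hC' := (isUnit_iff_isUnit_det C).mp hC
  rw [tstep, tstep, fromBlocks_zero_one_one_zero_conj, fromBlocks_multiply, ← fromBlocks_one]
  simp [mul_assoc, mul_nonsing_inv_cancel_left C _ hC', nonsing_inv_mul B hB']

theorem stmt2 {n m : ℕ}
    (A B C : Fin n → Matrix (Fin m) (Fin m) ℂ)
    (hB : ∀ k, IsUnit (B k)) (hC : ∀ k, IsUnit (C k)) (E : ℂ) :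
    (transfer A B C E)⁻¹ =
      Matrix.fromBlocks 0 1 1 0 *
        transfer (fun k => A k.rev) (fun k => C k.rev) (fun k => B k.rev) E *
        Matrix.fromBlocks 0 1 1 0 := by
  apply inv_eq_right_inv
  rw [transfer, transfer, List.reverse_ofFn_comp_rev (fun k => tstep (A k) (C k) (B k) E),
    List.conj_prod_eq_prod_map_conj fromBlocks_zero_one_one_zero_mul_self, List.map_ofFn]
  exact List.prod_reverse_ofFn_mul_prod_ofFn_eq_one _ _
    fun k => tstep_mul_swap_conj_tstep E (hB k) (hC k)
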